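/- arXiv:1206.1584 — 3 statements merged into one kernel-verified Lean document; each statement's English description precedes it below -/
import Mathlib

section
/- Let $p > 1$ and let $k \in \mathbb{N}$ be such that $k < p \le k+1$. Then for all real numbers $a \ge b \ge 0$, one has $(a-b)^p \ge a^p - b^p - \sum_{j=1}^{k} \binom{p}{j} b^{p-j} (a-b)^j$, where $\binom{p}{j} = \frac{p(p-1)\cdots(p-j+1)}{j!}$ is the generalized binomial coefficient. -/
/-!
Write `T p b k x = ∑_{j ≤ k} (p choose j) b^(p-j) x^j` for the degree-`k` Taylor polynomial of
`x ↦ (b + x)^p` at `0`. We show `(b + x)^p ≤ T p b k x + x^p` for `b, x ≥ 0` and `k < p ≤ k + 1`,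
by induction on `k`. For `k = 0` this is subadditivity of `t ↦ t^p` when `0 < p ≤ 1`. In the
inductive step, `x ↦ T p b (k+1) x + x^p - (b + x)^p` vanishes at `0` and, since
`d/dx T p b (k+1) x = p · T (p-1) b k x`, its derivative is `p` times the corresponding
difference for the exponent `p - 1`, which is nonnegative by induction.
-/

open Real Finset

noncomputable def genBinom (p : ℝ) (j : ℕ) : ℝ :=
  (∏ i ∈ Finset.range j, (p - i)) / (Nat.factorial j)

@[simp]
lemma genBinom_zero (p : ℝ) : genBinom p 0 = 1 := by simp [genBinom]

lemma succ_mul_genBinom_succ (p : ℝ) (j : ℕ) :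
    ((j : ℝ) + 1) * genBinom p (j + 1) = p * genBinom (p - 1) j := by
  have hprod : ∏ i ∈ range (j + 1), (p - i) = (∏ i ∈ range j, (p - 1 - i)) * p := by
    rw [prod_range_succ']
    simp only [Nat.cast_zero, sub_zero, Nat.cast_succ]
    exact congrArg (· * p) (prod_congr rfl fun i _ ↦ by ring)
  rw [genBinom, genBinom, hprod, Nat.factorial_succ]
  push_cast
  field_simp

noncomputable def binomTaylor (p b : ℝ) (k : ℕ) (x : ℝ) : ℝ :=
  ∑ j ∈ range (k + 1), genBinom p j * b ^ (p - j) * x ^ j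

@[simp]
lemma binomTaylor_zero_right (p b : ℝ) (k : ℕ) : binomTaylor p b k 0 = b ^ p := by
  simp [binomTaylor, sum_range_succ']

lemma hasDerivAt_binomTaylor (p b : ℝ) (k : ℕ) (x : ℝ) :
    HasDerivAt (binomTaylor p b (k + 1)) (p * binomTaylor (p - 1) b k x) x := by
  have hderiv : HasDerivAt (binomTaylor p b (k + 1))
      (∑ j ∈ range (k + 2), genBinom p j * b ^ (p - j) * (j * x ^ (j - 1))) x :=
    HasDerivAt.fun_sum fun j _ ↦ (hasDerivAt_pow j x).const_mul _
  convert hderiv using 1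
  rw [sum_range_succ', binomTaylor, mul_sum]
  simp only [Nat.cast_zero, zero_mul, mul_zero, add_zero, Nat.add_sub_cancel]
  refine sum_congr rfl fun j _ ↦ ?_
  have hexp : p - ((j + 1 : ℕ) : ℝ) = p - 1 - j := by push_cast; ring
  rw [hexp]
  push_cast
  linear_combination -(b ^ (p - 1 - j) * x ^ j) * succ_mul_genBinom_succ p j

theorem rpow_add_le_binomTaylor_add_rpow (k : ℕ) {p b x : ℝ} (hk1 : (k : ℝ) < p)
    (hk2 : p ≤ k + 1) (hb : 0 ≤ b) (hx : 0 ≤ x) :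
    (b + x) ^ p ≤ binomTaylor p b k x + x ^ p := by
  induction k generalizing p x with
  | zero =>
    simp only [Nat.cast_zero, zero_add] at hk1 hk2
    simpa [binomTaylor] using rpow_add_le_add_rpow hb hx hk1.le hk2
  | succ k ih =>
    push_cast at hk1 hk2
    have hp : 0 < p := by linarith [k.cast_nonneg (α := ℝ)]
    set g : ℝ → ℝ := fun y ↦ binomTaylor p b (k + 1) y + y ^ p - (b + y) ^ p
    have hg_deriv : ∀ y, 0 < y → HasDerivAt g
        (p * binomTaylor (p - 1) b k y + p * y ^ (p - 1) - p * (b + y) ^ (p - 1)) y := by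
      intro y hy
      have hpow := hasDerivAt_rpow_const (p := p) (Or.inl hy.ne')
      have hpow_add := (hasDerivAt_rpow_const (p := p) (Or.inl (by positivity : b + y ≠ 0))).comp
        y ((hasDerivAt_id y).const_add b)
      exact (((hasDerivAt_binomTaylor p b k y).add hpow).sub hpow_add).congr_deriv (by ring)
    have hg_cont : ContinuousOn g (Set.Ici 0) := by
      have hpow : Continuous fun y : ℝ ↦ y ^ p := continuous_id.rpow_const fun _ ↦ Or.inr hp.le
      have hT : Continuous (binomTaylor p b (k + 1)) := by unfold binomTaylor; fun_prop
      exact (hT.add hpow |>.sub (hpow.comp (continuous_const.add continuous_id))).continuousOn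
    have hg_mono : MonotoneOn g (Set.Ici 0) := by
      refine monotoneOn_of_hasDerivWithinAt_nonneg (convex_Ici 0) hg_cont
        (fun y hy ↦ (hg_deriv y (by simpa using hy)).hasDerivWithinAt) fun y hy ↦ ?_
      rw [interior_Ici, Set.mem_Ioi] at hy
      have hih := ih (p := p - 1) (x := y) (by linarith) (by linarith) hy.le
      linarith [mul_le_mul_of_nonneg_left hih hp.le]
    have hg_le := hg_mono Set.self_mem_Ici hx hx
    simp only [g, binomTaylor_zero_right, add_zero, zero_rpow hp.ne'] at hg_le
    linarith

theorem stmt0_general (p : ℝ) (k : ℕ) (hk1 : (k : ℝ) < p) (hk2 : p ≤ k + 1)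
    (a b : ℝ) (hb : 0 ≤ b) (hab : b ≤ a) :
    (a - b) ^ p ≥ a ^ p - b ^ p -
      ∑ j ∈ Finset.Icc 1 k, genBinom p j * b ^ (p - j) * (a - b) ^ (j : ℕ) := by
  have h := rpow_add_le_binomTaylor_add_rpow k hk1 hk2 hb (sub_nonneg.2 hab)
  rw [add_sub_cancel, binomTaylor, range_eq_Ico, sum_eq_sum_Ico_succ_bot k.add_one_pos,
    zero_add, Ico_add_one_right_eq_Icc] at h
  simp only [genBinom_zero, Nat.cast_zero, sub_zero, pow_zero, one_mul, mul_one] at h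
  linarith

theorem stmt0 (p : ℝ) (k : ℕ) (hp : 1 < p) (hk1 : (k : ℝ) < p) (hk2 : p ≤ k + 1)
    (a b : ℝ) (hb : 0 ≤ b) (hab : b ≤ a) :
    (a - b) ^ p ≥ a ^ p - b ^ p -
      ∑ j ∈ Finset.Icc 1 k, genBinom p j * b ^ (p - j) * (a - b) ^ (j : ℕ) :=
  stmt0_general p k hk1 hk2 a b hb hab
end

section
/- Let $p > n \ge 1$ and set $\frac{1}{\bar p} = \frac{1}{p} - \frac{1}{n} < 0$. Let $f : (0,1] \to [0,\infty)$ be nonincreasing and integrable and $g : (0,1) \to [0,\infty)$ measurable with $\|g\|_{L^p(0,1)} < \infty$. Suppose $f^{**}(t) - f(t) \le C\, t^{-1/\bar p}\left(\int_0^t g(s)^p ds\right)^{1/p}$ for all $t \in (0,1]$, where $f^{**}(t) = \frac{1}{t}\int_0^t f(s)ds$. If moreover $\lim_{t\to 0^+} f^{**}(t)$ exists (call it $f^{**}(0)$), then $f^{**}(0) - f^{**}(1) \le C \left(\int_0^1 t^{-1/\bar p - 1} dt\right) \|g\|_{L^p(0,1)} = C\, (-\bar p)\, \|g\|_{L^p(0,1)}$.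 -/
open MeasureTheory Real intervalIntegral Filter

lemma fub_aux (fm : ℝ → ℝ) (hfm : Measurable fm)
    (hint : IntegrableOn fm (Set.Ioc 0 1))
    (ε : ℝ) (hε0 : 0 < ε) (hε1 : ε ≤ 1) :
    ∫ t in Set.Ioc ε 1, (∫ s in Set.Ioc 0 t, fm s) / t ^ 2
      = ∫ s in Set.Ioc 0 1, fm s * ((max ε s)⁻¹ - 1) := by
  set H : ℝ → ℝ → ℝ := fun t s => if s ≤ t then fm s / t ^ 2 else 0 with hH
  have hHmeas : Measurable (Function.uncurry H) := by
    apply Measurable.ite (measurableSet_le measurable_snd measurable_fst)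
    · exact (hfm.comp measurable_snd).div ((measurable_fst.pow_const 2))
    · exact measurable_const
  have hHint : Integrable (Function.uncurry H)
      ((volume.restrict (Set.Ioc ε 1)).prod (volume.restrict (Set.Ioc 0 1))) := by
    have hbd : Integrable (fun z : ℝ × ℝ => (ε^2)⁻¹ * |fm z.2|)
        ((volume.restrict (Set.Ioc ε 1)).prod (volume.restrict (Set.Ioc 0 1))) := by
      have hc : Integrable (fun _ : ℝ => (ε^2)⁻¹) (volume.restrict (Set.Ioc ε 1)) :=
        integrable_const _
      exact hc.mul_prod hint.abs
    refine hbd.mono hHmeas.aestronglyMeasurable ?_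
    rw [Measure.prod_restrict]
    refine (MeasureTheory.ae_restrict_mem (measurableSet_Ioc.prod measurableSet_Ioc)).mono ?_
    rintro ⟨t, s⟩ ⟨ht, hs⟩
    simp only [Function.uncurry, hH]
    rcases le_or_gt s t with h | h
    · rw [if_pos h]
      have ht0 : 0 < t := lt_trans hε0 ht.1
      have : |fm s / t ^ 2| = |fm s| / t^2 := by
        rw [abs_div, abs_of_nonneg (by positivity : (0:ℝ) ≤ t^2)]
      rw [Real.norm_eq_abs, Real.norm_eq_abs, this, abs_of_nonneg (by positivity : (0:ℝ) ≤ (ε^2)⁻¹ * |fm s|)]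
      rw [div_eq_inv_mul]
      have h2 : (t^2)⁻¹ ≤ (ε^2)⁻¹ :=
        inv_anti₀ (by positivity) (pow_le_pow_left₀ hε0.le ht.1.le 2)
      exact mul_le_mul_of_nonneg_right h2 (abs_nonneg _)
    · rw [if_neg (not_le.2 h)]
      simp [abs_nonneg]
      positivity
  have step1 : ∀ t ∈ Set.Ioc ε 1,
      (∫ s in Set.Ioc 0 t, fm s) / t ^ 2 = ∫ s in Set.Ioc 0 1, H t s := by
    intro t ht
    have : ∫ s in Set.Ioc 0 1, H t s
        = ∫ s in Set.Ioc 0 1, Set.indicator (Set.Iic t) (fun s => fm s / t^2) s := by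
      refine setIntegral_congr_fun measurableSet_Ioc (fun s _ => ?_)
      simp [hH, Set.indicator, Set.mem_Iic]
    rw [this, setIntegral_indicator measurableSet_Iic]
    have hset : Set.Ioc (0:ℝ) 1 ∩ Set.Iic t = Set.Ioc 0 t := by
      rw [Set.Ioc_inter_Iic, min_eq_right ht.2]
    rw [hset, MeasureTheory.integral_div]
  rw [setIntegral_congr_fun measurableSet_Ioc step1]
  rw [MeasureTheory.integral_integral_swap hHint]
  refine setIntegral_congr_fun measurableSet_Ioc (fun s hs => ?_)
  -- ∫ t in Ioc ε 1, H t s = fm s * ((max ε s)⁻¹ - 1)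
  have hset2 : ∫ t in Set.Ioc ε 1, H t s = ∫ t in Set.Ioc (max ε s) 1, fm s / t ^ 2 := by
    have : ∫ t in Set.Ioc ε 1, H t s
        = ∫ t in Set.Ioc ε 1, Set.indicator (Set.Ici s) (fun t => fm s / t^2) t := by
      refine setIntegral_congr_fun measurableSet_Ioc (fun t _ => ?_)
      simp only [hH, Set.indicator, Set.mem_Ici]
    rw [this, setIntegral_indicator measurableSet_Ici]
    refine setIntegral_congr_set ?_
    have hnull : (volume : Measure ℝ) {max ε s} = 0 := measure_singleton _
    rw [Filter.eventuallyEq_set]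
    filter_upwards [compl_mem_ae_iff.2 hnull] with x hx
    simp only [Set.mem_inter_iff, Set.mem_Ioc, Set.mem_Ici, Set.mem_compl_iff,
      Set.mem_singleton_iff] at *
    constructor
    · rintro ⟨⟨h1, h2⟩, h3⟩
      exact ⟨lt_of_le_of_ne (max_le h1.le h3) (Ne.symm hx), h2⟩
    · rintro ⟨h1, h2⟩
      have := max_lt_iff.mp h1
      exact ⟨⟨this.1, h2⟩, this.2.le⟩
  rw [hset2]
  have hm0 : 0 < max ε s := lt_max_of_lt_left hε0
  have hm1 : max ε s ≤ 1 := max_le hε1 hs.2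
  have hval : ∫ t in Set.Ioc (max ε s) 1, (t ^ (-2:ℤ) : ℝ) = (max ε s)⁻¹ - 1 := by
    rw [← intervalIntegral.integral_of_le hm1, integral_zpow]
    · norm_num [zpow_neg, zpow_one]
      ring
    · exact Or.inr ⟨by norm_num, Set.notMem_uIcc_of_lt hm0 one_pos⟩
  have : ∫ t in Set.Ioc (max ε s) 1, fm s / t ^ 2
      = fm s * ∫ t in Set.Ioc (max ε s) 1, (t ^ (-2 : ℤ) : ℝ) := by
    rw [← MeasureTheory.integral_const_mul]
    refine setIntegral_congr_fun measurableSet_Ioc (fun t ht => ?_)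
    rw [zpow_neg, div_eq_mul_inv]
    norm_num
  rw [this, hval]

set_option maxHeartbeats 1000000 in

theorem stmt13 (n : ℕ) (hn : 1 ≤ n) (p : ℝ) (hpn : (n : ℝ) < p)
    (pbar : ℝ) (hpbar : 1 / pbar = 1 / p - 1 / n)
    (f : ℝ → ℝ) (hf_nonneg : ∀ s, 0 < s → 0 ≤ f s)
    (hf_mono : AntitoneOn f (Set.Ioc 0 1))
    (hf_int : IntegrableOn f (Set.Ioc 0 1))
    (g : ℝ → ℝ) (hg_meas : Measurable g) (hg_nonneg : ∀ s, 0 < s → 0 ≤ g s)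
    (hg_int : IntegrableOn (fun s => g s ^ p) (Set.Ioc 0 1))
    (C : ℝ) (hC : 0 ≤ C)
    (habaco : ∀ t ∈ Set.Ioc (0 : ℝ) 1,
      ((1 / t) * ∫ s in (0 : ℝ)..t, f s) - f t
        ≤ C * t ^ (-(1 / pbar)) * (∫ s in (0 : ℝ)..t, g s ^ p) ^ (1 / p))
    (L : ℝ)
    (hL : Tendsto (fun t => (1 / t) * ∫ s in (0 : ℝ)..t, f s)
      (nhdsWithin 0 (Set.Ioi 0)) (nhds L)) :
    L - ∫ s in (0 : ℝ)..1, f s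
      ≤ C * (∫ t in (0 : ℝ)..1, t ^ (-(1 / pbar) - 1))
          * (∫ s in (0 : ℝ)..1, g s ^ p) ^ (1 / p) := by
  have hn0 : (0:ℝ) < n := by positivity
  have hp0 : (0:ℝ) < p := lt_trans hn0 hpn
  have hpbar_neg : 1 / pbar < 0 := by
    rw [hpbar]
    have : 1/p < 1/n := one_div_lt_one_div_of_lt hn0 hpn
    linarith
  set e : ℝ := -(1/pbar) - 1 with he_def
  have he : -1 < e := by rw [he_def]; linarith
  set G : ℝ := (∫ s in (0:ℝ)..1, g s ^ p) ^ (1/p) with hGdef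
  have hgp_nonneg : ∀ t : ℝ, 0 ≤ ∫ s in Set.Ioc (0:ℝ) t, g s ^ p := by
    intro t
    exact setIntegral_nonneg measurableSet_Ioc (fun s hs => Real.rpow_nonneg (hg_nonneg s hs.1) p)
  have hG_nonneg : 0 ≤ G := by
    rw [hGdef, intervalIntegral.integral_of_le zero_le_one]
    exact Real.rpow_nonneg (hgp_nonneg 1) _
  -- measurable representative of f
  obtain ⟨fm, hfm_meas, hfm_eq⟩ :
      ∃ fm : ℝ → ℝ, Measurable fm ∧ f =ᵐ[volume.restrict (Set.Ioc 0 1)] fm := by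
    have h := hf_int.aestronglyMeasurable.aemeasurable
    exact ⟨h.mk f, h.measurable_mk, h.ae_eq_mk⟩
  have hfm_int : IntegrableOn fm (Set.Ioc 0 1) := hf_int.congr_fun_ae hfm_eq
  have hIt : ∀ t ∈ Set.Ioc (0:ℝ) 1,
      (∫ s in (0:ℝ)..t, f s) = ∫ s in Set.Ioc 0 t, fm s := by
    intro t ht
    rw [intervalIntegral.integral_of_le ht.1.le]
    exact integral_congr_ae
      (ae_restrict_of_ae_restrict_of_subset (Set.Ioc_subset_Ioc_right ht.2) hfm_eq)
  -- Step C : pointwise bound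
  have hCbound : ∀ t ∈ Set.Ioc (0:ℝ) 1,
      (((1 / t) * ∫ s in (0 : ℝ)..t, f s) - f t) / t ≤ C * t ^ e * G := by
    intro t ht
    have hgm : (∫ s in (0:ℝ)..t, g s ^ p) ^ (1/p) ≤ G := by
      rw [hGdef, intervalIntegral.integral_of_le ht.1.le,
        intervalIntegral.integral_of_le zero_le_one]
      refine Real.rpow_le_rpow (hgp_nonneg t) ?_ (one_div_nonneg.2 hp0.le)
      refine setIntegral_mono_set hg_int ?_ ?_
      · exact (ae_restrict_mem measurableSet_Ioc).mono
          (fun s hs => Real.rpow_nonneg (hg_nonneg s hs.1) p)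
      · exact HasSubset.Subset.eventuallyLE (Set.Ioc_subset_Ioc_right ht.2)
    have h1 : ((1 / t) * ∫ s in (0 : ℝ)..t, f s) - f t ≤ C * t ^ (-(1/pbar)) * G := by
      refine le_trans (habaco t ht) ?_
      have h0 : 0 ≤ C * t ^ (-(1/pbar)) := mul_nonneg hC (Real.rpow_nonneg ht.1.le _)
      exact mul_le_mul_of_nonneg_left hgm h0
    have h2 : (C * t ^ (-(1/pbar)) * G) / t = C * t ^ e * G := by
      rw [he_def, show -(1/pbar) - 1 = -(1/pbar) - (1:ℝ) from rfl,
        Real.rpow_sub ht.1, Real.rpow_one]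
      field_simp
    calc (((1 / t) * ∫ s in (0 : ℝ)..t, f s) - f t) / t
        ≤ (C * t ^ (-(1/pbar)) * G) / t := div_le_div_of_nonneg_right h1 ht.1.le
      _ = C * t ^ e * G := h2
  -- primitive continuity
  have hfm_Icc : IntegrableOn fm (Set.Icc 0 1) := by
    rw [integrableOn_Icc_iff_integrableOn_Ioc]
    exact hfm_int
  have hprim_cont : ContinuousOn (fun x => ∫ s in Set.Ioc 0 x, fm s) (Set.Icc 0 1) :=
    intervalIntegral.continuousOn_primitive hfm_Icc
  have hCe_int : IntegrableOn (fun t : ℝ => C * t ^ e * G) (Set.Ioc 0 1) := by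
    have h1 : IntervalIntegrable (fun x : ℝ => x ^ e) volume 0 1 :=
      intervalIntegral.intervalIntegrable_rpow' he
    have h2 := (intervalIntegrable_iff_integrableOn_Ioc_of_le zero_le_one).1 h1
    exact (h2.const_mul C).mul_const G
  have key : ∀ ε ∈ Set.Ioc (0:ℝ) 1,
      ((1/ε) * ∫ s in (0:ℝ)..ε, f s) - (∫ s in (0:ℝ)..1, f s)
        ≤ C * (∫ t in (0:ℝ)..1, t ^ e) * G := by
    intro ε hε
    have hε0 : 0 < ε := hε.1
    have hε1 : ε ≤ 1 := hε.2
    have hA_int : IntegrableOn (fun t => (∫ s in Set.Ioc 0 t, fm s) / t ^ 2) (Set.Ioc ε 1) := by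
      have hc : ContinuousOn (fun t => (∫ s in Set.Ioc 0 t, fm s) / t ^ 2) (Set.Icc ε 1) := by
        apply ContinuousOn.div
        · exact hprim_cont.mono (Set.Icc_subset_Icc_left hε0.le)
        · exact (continuous_pow 2).continuousOn
        · intro t ht
          exact pow_ne_zero 2 (ne_of_gt (lt_of_lt_of_le hε0 ht.1))
      exact (hc.integrableOn_Icc).mono_set Set.Ioc_subset_Icc_self
    have hB_int : IntegrableOn (fun t => fm t / t) (Set.Ioc ε 1) := by
      have hb : IntegrableOn (fun t => ε⁻¹ * |fm t|) (Set.Ioc ε 1) :=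
        ((hfm_int.mono_set (Set.Ioc_subset_Ioc_left hε0.le)).abs).const_mul _
      refine Integrable.mono hb ((hfm_meas.div measurable_id).aestronglyMeasurable) ?_
      refine (ae_restrict_mem measurableSet_Ioc).mono (fun t ht => ?_)
      have ht0 : 0 < t := lt_trans hε0 ht.1
      have hnn : (0:ℝ) ≤ ε⁻¹ * |fm t| := mul_nonneg (inv_nonneg.2 hε0.le) (abs_nonneg _)
      rw [Real.norm_eq_abs, Real.norm_eq_abs, abs_div, abs_of_pos ht0, abs_of_nonneg hnn,
        div_eq_inv_mul]
      exact mul_le_mul_of_nonneg_right (inv_anti₀ hε0 ht.1.le) (abs_nonneg _)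
    have hφ_int : IntegrableOn (fun s => fm s * ((max ε s)⁻¹ - 1)) (Set.Ioc 0 1) := by
      have hb : IntegrableOn (fun s => |fm s| * (ε⁻¹ + 1)) (Set.Ioc 0 1) :=
        hfm_int.abs.mul_const _
      refine Integrable.mono hb ((hfm_meas.mul
        (((measurable_const.max measurable_id).inv).sub measurable_const)).aestronglyMeasurable) ?_
      refine (ae_restrict_mem measurableSet_Ioc).mono (fun s hs => ?_)
      have h2 : (0:ℝ) < max ε s := lt_max_of_lt_left hε0
      have h3 : (max ε s)⁻¹ ≤ ε⁻¹ := inv_anti₀ hε0 (le_max_left _ _)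
      have h4 : (0:ℝ) ≤ (max ε s)⁻¹ := inv_nonneg.2 h2.le
      have h1 : |(max ε s)⁻¹ - 1| ≤ ε⁻¹ + 1 := by
        rw [abs_le]; constructor <;> linarith
      have hnn : (0:ℝ) ≤ |fm s| * (ε⁻¹ + 1) :=
        mul_nonneg (abs_nonneg _) (by linarith [inv_nonneg.2 hε0.le] : (0:ℝ) ≤ ε⁻¹ + 1)
      rw [Real.norm_eq_abs, Real.norm_eq_abs, abs_mul, abs_of_nonneg hnn]
      exact mul_le_mul_of_nonneg_left h1 (abs_nonneg _)
    have hsplit : Set.Ioc (0:ℝ) 1 = Set.Ioc 0 ε ∪ Set.Ioc ε 1 :=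
      (Set.Ioc_union_Ioc_eq_Ioc hε0.le hε1).symm
    have hdisj : Disjoint (Set.Ioc (0:ℝ) ε) (Set.Ioc ε 1) := Set.Ioc_disjoint_Ioc_of_le le_rfl
    have hsub1 : Set.Ioc (0:ℝ) ε ⊆ Set.Ioc 0 1 := Set.Ioc_subset_Ioc_right hε1
    have hsub2 : Set.Ioc ε 1 ⊆ Set.Ioc 0 1 := Set.Ioc_subset_Ioc_left hε0.le
    have hφsplit : ∫ s in Set.Ioc (0:ℝ) 1, fm s * ((max ε s)⁻¹ - 1)
        = (∫ s in Set.Ioc 0 ε, fm s * ((max ε s)⁻¹ - 1))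
          + ∫ s in Set.Ioc ε 1, fm s * ((max ε s)⁻¹ - 1) := by
      rw [hsplit]
      exact setIntegral_union hdisj measurableSet_Ioc (hφ_int.mono_set hsub1)
        (hφ_int.mono_set hsub2)
    have hφa : ∫ s in Set.Ioc (0:ℝ) ε, fm s * ((max ε s)⁻¹ - 1)
        = (ε⁻¹ - 1) * ∫ s in Set.Ioc 0 ε, fm s := by
      rw [← MeasureTheory.integral_const_mul]
      refine setIntegral_congr_fun measurableSet_Ioc (fun s hs => ?_)
      rw [max_eq_left hs.2]
      ring
    have hφb : ∫ s in Set.Ioc ε 1, fm s * ((max ε s)⁻¹ - 1)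
        = (∫ s in Set.Ioc ε 1, fm s / s) - ∫ s in Set.Ioc ε 1, fm s := by
      rw [← integral_sub hB_int (hfm_int.mono_set hsub2)]
      refine setIntegral_congr_fun measurableSet_Ioc (fun s hs => ?_)
      rw [max_eq_right hs.1.le, mul_sub, mul_one, ← div_eq_mul_inv]
    have hIoc01 : ∫ s in Set.Ioc (0:ℝ) 1, fm s
        = (∫ s in Set.Ioc 0 ε, fm s) + ∫ s in Set.Ioc ε 1, fm s := by
      rw [hsplit]
      exact setIntegral_union hdisj measurableSet_Ioc (hfm_int.mono_set hsub1)
        (hfm_int.mono_set hsub2)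
    have hid : ((1/ε) * ∫ s in (0:ℝ)..ε, f s) - (∫ s in (0:ℝ)..1, f s)
        = (∫ t in Set.Ioc ε 1, (∫ s in Set.Ioc 0 t, fm s) / t ^ 2)
          - ∫ t in Set.Ioc ε 1, fm t / t := by
      rw [fub_aux fm hfm_meas hfm_int ε hε0 hε1, hIt ε hε, hIt 1 ⟨zero_lt_one, le_refl 1⟩,
        hφsplit, hφa, hφb, hIoc01]
      ring
    have hsub : (∫ t in Set.Ioc ε 1, (∫ s in Set.Ioc 0 t, fm s) / t ^ 2)
        - (∫ t in Set.Ioc ε 1, fm t / t)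
        = ∫ t in Set.Ioc ε 1, ((∫ s in Set.Ioc 0 t, fm s) / t ^ 2 - fm t / t) :=
      (integral_sub hA_int hB_int).symm
    have hmono1 : ∫ t in Set.Ioc ε 1, ((∫ s in Set.Ioc 0 t, fm s) / t ^ 2 - fm t / t)
        ≤ ∫ t in Set.Ioc ε 1, C * t ^ e * G := by
      refine setIntegral_mono_ae_restrict (hA_int.sub hB_int) (hCe_int.mono_set hsub2) ?_
      filter_upwards [ae_restrict_mem measurableSet_Ioc,
        ae_restrict_of_ae_restrict_of_subset hsub2 hfm_eq] with t ht hft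
      have ht01 : t ∈ Set.Ioc (0:ℝ) 1 := ⟨lt_trans hε0 ht.1, ht.2⟩
      have hb := hCbound t ht01
      have heq : (((1 / t) * ∫ s in (0:ℝ)..t, f s) - f t) / t
          = (∫ s in Set.Ioc 0 t, fm s) / t ^ 2 - fm t / t := by
        rw [hIt t ht01, ← hft]
        have ht0 : t ≠ 0 := ne_of_gt ht01.1
        field_simp
      rw [← heq]
      exact hb
    have hmono2 : ∫ t in Set.Ioc ε 1, C * t ^ e * G ≤ ∫ t in Set.Ioc 0 1, C * t ^ e * G := by
      refine setIntegral_mono_set hCe_int ?_ (HasSubset.Subset.eventuallyLE hsub2)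
      exact (ae_restrict_mem measurableSet_Ioc).mono
        (fun t ht => mul_nonneg (mul_nonneg hC (Real.rpow_nonneg ht.1.le _)) hG_nonneg)
    have hfinal : ∫ t in Set.Ioc (0:ℝ) 1, C * t ^ e * G
        = C * (∫ t in (0:ℝ)..1, t ^ e) * G := by
      rw [intervalIntegral.integral_of_le zero_le_one]
      have h1 : ∫ t in Set.Ioc (0:ℝ) 1, C * t ^ e * G
          = ∫ t in Set.Ioc (0:ℝ) 1, (C * G) * t ^ e := by
        refine setIntegral_congr_fun measurableSet_Ioc (fun t _ => ?_)
        ring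
      rw [h1, MeasureTheory.integral_const_mul]
      ring
    rw [hid, hsub]
    exact le_trans hmono1 (le_trans hmono2 (le_of_eq hfinal))
  have hten : Tendsto (fun ε : ℝ => ((1/ε) * ∫ s in (0:ℝ)..ε, f s) - ∫ s in (0:ℝ)..1, f s)
      (nhdsWithin 0 (Set.Ioi 0)) (nhds (L - ∫ s in (0:ℝ)..1, f s)) := hL.sub_const _
  refine le_of_tendsto hten ?_
  exact Filter.eventually_of_mem (Ioc_mem_nhdsGT_of_mem ⟨le_refl (0:ℝ), zero_lt_one⟩) key
end

section
/- Let $n \ge 2$, $1 \le p < n$, $\frac{1}{\bar p} = \frac{1}{p} - \frac{1}{n}$, and $T > 0$. Let $f : (0,T) \to [0,\infty)$ be nonincreasing, locally absolutely continuous, with $f(T^-) = 0$, and suppose $\int_0^T \left(t^{1-\frac{1}{n}} (-f'(t))\right)^p dt < \infty$ and apriori $\int_0^T t^{-p/n} (f^{**}(t) - f(t))^p dt < \infty$, where $f^{**}(t) = \frac{1}{t}\int_0^t f$. Then $\left(\int_0^T \left((f^{**}(t) - f(t))\, t^{1/\bar p}\right)^p \frac{dt}{t}\right)^{1/p} \le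 C_{n,p} \left(\int_0^T \left(t^{1 - \frac{1}{n}} (-f'(t))\right)^p dt\right)^{1/p}$ for a constant $C_{n,p}$ depending only on $n$ and $p$. -/
/-!
Write `u = f** - f`. Since `(f**)' = (f - f**) / t`, the Maz'ya–Talenti functional
`F(t) = u(t)^p t^(1-p/n)` has derivative
`F' = (1 - p/n - p) t^(-p/n) u^p + p t^(1-p/n) u^(p-1) (-f')`,
and Young's inequality for the exponents `p/(p-1)` and `p` turns this into
`F' ≤ (t^(1-1/n) (-f'))^p - (p/n) t^(-p/n) u^p`.
Integrating over `[a, c] ⊂ (0, T)` and dropping `F(c) ≥ 0` bounds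
`(p/n) ∫_a^c t^(-p/n) u^p - ∫_a^c (t^(1-1/n) (-f'))^p` by `F(a) = a · a^(-p/n) u(a)^p`,
which is small for some arbitrarily small `a` because `t^(-p/n) u^p` is integrable near `0`.
Hence `∫_0^T t^(-p/n) u^p ≤ (n/p) ∫_0^T (t^(1-1/n) (-f'))^p`, i.e. `C = (n/p)^(1/p)`.
-/

open MeasureTheory Real intervalIntegral Filter

open Set Topology

namespace Real

lemma rpow_sub_one_mul_self {p : ℝ} (hp : p ≠ 0) (x : ℝ) : x ^ (p - 1) * x = x ^ p := by
  rcases eq_or_ne x 0 with rfl | hx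
  · rw [mul_zero, zero_rpow hp]
  · rw [rpow_sub_one hx, div_mul_cancel₀ _ hx]

lemma neg_rpow_of_nonneg {x : ℝ} (hx : 0 ≤ x) {p : ℝ} (hp : p ≠ 0) :
    (-x) ^ p = cos (p * π) * x ^ p := by
  rcases hx.eq_or_lt with rfl | hx
  · simp [zero_rpow hp]
  · rw [rpow_def_of_neg (neg_lt_zero.2 hx), log_neg_eq_log, rpow_def_of_pos hx, mul_comm]

lemma mul_rpow_of_pos_right {x y : ℝ} (hy : 0 < y) (p : ℝ) : (x * y) ^ p = x ^ p * y ^ p := by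
  rcases le_or_gt 0 x with hx | hx
  · exact mul_rpow hx hy.le
  · rw [rpow_def_of_neg (mul_neg_of_neg_of_pos hx hy), rpow_def_of_neg hx, rpow_def_of_pos hy,
      log_mul hx.ne hy.ne', add_mul, exp_add]
    ring

lemma rpow_sub_one_mul_le {a b p : ℝ} (ha : 0 ≤ a) (hb : 0 ≤ b) (hp : 1 ≤ p) :
    a ^ (p - 1) * b ≤ (p - 1) / p * a ^ p + 1 / p * b ^ p := by
  have hp0 : 0 < p := by linarith
  calc a ^ (p - 1) * b = (a ^ p) ^ ((p - 1) / p) * (b ^ p) ^ (1 / p) := by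
        rw [← rpow_mul ha, ← rpow_mul hb, mul_div_cancel₀ _ hp0.ne', mul_one_div_cancel hp0.ne',
          rpow_one]
    _ ≤ (p - 1) / p * a ^ p + 1 / p * b ^ p :=
        geom_mean_le_arith_mean2_weighted (by positivity) (by positivity) (by positivity)
          (by positivity) (by field_simp; ring)

lemma self_le_one_add_rpow {x p : ℝ} (hx : 0 ≤ x) (hp : 1 ≤ p) : x ≤ 1 + x ^ p := by
  rcases le_or_gt x 1 with h | h
  · linarith [rpow_nonneg hx p]
  · linarith [self_le_rpow_of_one_le h.le hp]

end Real

lemma HasDerivAt.nonpos_of_antitoneOn {g : ℝ → ℝ} {g' x : ℝ} {s : Set ℝ}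
    (hd : HasDerivAt g g' x) (hg : AntitoneOn g s) (hs : s ∈ 𝓝 x) : g' ≤ 0 := by
  have hacc : AccPt x (𝓟 s) := by
    simpa using (PerfectSpace.univ_preperfect x (mem_univ x)).nhds_inter hs
  exact hd.hasDerivWithinAt.nonpos_of_antitoneOn hacc hg

lemma IntegrableOn.intervalIntegrable_of_mem_Ioc {f : ℝ → ℝ} {a b t : ℝ}
    (hfi : IntegrableOn f (Ioo a b)) (ht : t ∈ Ioc a b) : IntervalIntegrable f volume a t :=
  (intervalIntegrable_iff_integrableOn_Ioo_of_le ht.1.le).2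
    (hfi.mono_set (Ioo_subset_Ioo_right ht.2))

lemma intervalIntegral_nonneg_of_forall_Ioo {f : ℝ → ℝ} {a b : ℝ} (hab : a ≤ b)
    (hf : ∀ x ∈ Ioo a b, 0 ≤ f x) : 0 ≤ ∫ x in a..b, f x := by
  rw [integral_of_le hab, integral_Ioc_eq_integral_Ioo]
  exact setIntegral_nonneg measurableSet_Ioo hf

lemma frequently_mul_lt_of_integrableOn {g : ℝ → ℝ} {δ η : ℝ} (hδ : 0 < δ) (hη : 0 < η)
    (hg : IntegrableOn g (Ioo 0 δ)) : ∃ᶠ a in 𝓝[>] 0, a * g a < η := by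
  intro h
  obtain ⟨ε, hε, hsub⟩ := mem_nhdsGT_iff_exists_Ioo_subset.1 h
  have hr : 0 < min ε δ := lt_min hε hδ
  have hinv : IntervalIntegrable (fun x : ℝ => x⁻¹) volume 0 (min ε δ) := by
    rw [intervalIntegrable_iff_integrableOn_Ioo_of_le hr.le]
    refine ((hg.mono_set (Ioo_subset_Ioo_right (min_le_right _ _))).const_mul η⁻¹).mono'
      measurable_inv.aestronglyMeasurable ?_
    filter_upwards [ae_restrict_mem measurableSet_Ioo] with x hx
    have hgx : η ≤ x * g x := not_lt.1 (hsub ⟨hx.1, hx.2.trans_le (min_le_left _ _)⟩)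
    rw [norm_inv, norm_of_nonneg hx.1.le]
    calc x⁻¹ = η⁻¹ * (η / x) := by field_simp
      _ ≤ η⁻¹ * g x := by
        gcongr
        rw [div_le_iff₀ hx.1]
        linarith
  simp [intervalIntegrable_inv_iff, hr.ne, hr.le] at hinv

lemma intervalIntegral_nonpos_of_le_of_frequently_lt {Φ F : ℝ → ℝ} {T : ℝ} (hT : 0 < T)
    (hΦ : IntegrableOn Φ (Icc 0 T))
    (hle : ∀ a c, 0 < a → a < c → c < T → ∫ x in a..c, Φ x ≤ F a)
    (hF : ∀ η > 0, ∃ᶠ a in 𝓝[>] 0, F a < η) : ∫ x in 0..T, Φ x ≤ 0 := by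
  have hle_T : ∀ a ∈ Ioo 0 T, ∫ x in a..T, Φ x ≤ F a := by
    intro a ha
    have hcont := continuousOn_primitive_interval (μ := volume) (a := a) (b := T)
      (by rw [uIcc_of_le ha.2.le]; exact hΦ.mono_set (Icc_subset_Icc_left ha.1.le))
    rw [uIcc_of_le ha.2.le] at hcont
    refine ((hcont T (right_mem_Icc.2 ha.2.le)).mono Ioo_subset_Icc_self).closure_le ?_
      continuousWithinAt_const fun c hc => hle a c ha.1 hc.1 hc.2
    rw [closure_Ioo ha.2.ne]
    exact right_mem_Icc.2 ha.2.le
  have hlim : Tendsto (fun a => ∫ x in a..T, Φ x) (𝓝[>] 0) (𝓝 (∫ x in 0..T, Φ x)) := by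
    have hcont := continuousOn_primitive_interval_left (μ := volume) (a := 0) (b := T)
      (by rwa [uIcc_of_le hT.le])
    rw [uIcc_of_le hT.le] at hcont
    exact (hcont 0 (left_mem_Icc.2 hT.le)).mono_of_mem_nhdsWithin
      (mem_of_superset (Ioo_mem_nhdsGT hT) Ioo_subset_Icc_self)
  have hmem : ∀ᶠ a in 𝓝[>] 0, a ∈ Ioo 0 T := Ioo_mem_nhdsGT hT
  refine le_of_forall_pos_lt_add fun ε hε => ?_
  obtain ⟨a, hFa, haT, hclose⟩ := ((hF (ε / 2) (half_pos hε)).and_eventually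
    (hmem.and (hlim.eventually (lt_mem_nhds (sub_lt_self _ (half_pos hε)))))).exists
  linarith [hle_T a haT]

noncomputable def doubleStar (f : ℝ → ℝ) (t : ℝ) : ℝ := (1 / t) * ∫ s in (0 : ℝ)..t, f s

lemma le_doubleStar {f : ℝ → ℝ} {t : ℝ} (ht : 0 < t) (hf : AntitoneOn f (Ioc 0 t))
    (hfi : IntervalIntegrable f volume 0 t) : f t ≤ doubleStar f t := by
  have hmono : ∫ _ in (0 : ℝ)..t, f t ≤ ∫ s in (0 : ℝ)..t, f s :=
    integral_mono_on_of_le_Ioo ht.le intervalIntegrable_const hfi fun s hs =>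
      hf ⟨hs.1, hs.2.le⟩ ⟨ht, le_rfl⟩ hs.2.le
  rw [intervalIntegral.integral_const, sub_zero, smul_eq_mul] at hmono
  rw [doubleStar, one_div, le_inv_mul_iff₀ ht]
  exact hmono

lemma hasDerivAt_doubleStar {f : ℝ → ℝ} {t : ℝ} (ht : t ≠ 0)
    (hfi : IntervalIntegrable f volume 0 t) (hmeas : StronglyMeasurableAtFilter f (𝓝 t))
    (hcont : ContinuousAt f t) : HasDerivAt (doubleStar f) ((f t - doubleStar f t) / t) t := by
  have h := (hasDerivAt_inv ht).fun_mul (integral_hasDerivAt_right hfi hmeas hcont)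
  have hfun : doubleStar f = fun x => x⁻¹ * ∫ s in (0 : ℝ)..x, f s := by
    funext x
    rw [doubleStar, one_div]
  rw [hfun]
  refine h.congr_deriv ?_
  field_simp
  ring

lemma doubleStar_sub_nonneg {f : ℝ → ℝ} {T t : ℝ} (hf : AntitoneOn f (Ioo 0 T))
    (hfi : IntegrableOn f (Ioo 0 T)) (ht : t ∈ Ioo 0 T) : 0 ≤ doubleStar f t - f t :=
  sub_nonneg.2 <| le_doubleStar ht.1 (hf.mono (Ioc_subset_Ioo_right ht.2))
    (IntegrableOn.intervalIntegrable_of_mem_Ioc hfi ⟨ht.1, ht.2.le⟩)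

noncomputable def mazyaTalentiFunctional (n p : ℝ) (f : ℝ → ℝ) (t : ℝ) : ℝ :=
  (doubleStar f t - f t) ^ p * t ^ (1 - p / n)

lemma mazyaTalentiFunctional_eq_mul {n p t : ℝ} {f : ℝ → ℝ} (ht : 0 < t) :
    mazyaTalentiFunctional n p f t = t * (t ^ (-(p / n)) * (doubleStar f t - f t) ^ p) := by
  rw [mazyaTalentiFunctional, show 1 - p / n = 1 + -(p / n) by ring, rpow_add ht, rpow_one]
  ring

lemma hasDerivAt_mazyaTalentiFunctional {n p t f' : ℝ} {f : ℝ → ℝ} (hp : 1 ≤ p) (ht : 0 < t)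
    (hfi : IntervalIntegrable f volume 0 t) (hmeas : StronglyMeasurableAtFilter f (𝓝 t))
    (hf : HasDerivAt f f' t) :
    HasDerivAt (mazyaTalentiFunctional n p f)
      ((1 - p / n - p) * (t ^ (-(p / n)) * (doubleStar f t - f t) ^ p)
        + p * (t ^ (1 - p / n) * (doubleStar f t - f t) ^ (p - 1) * -f')) t := by
  set u := doubleStar f t - f t
  have hu : HasDerivAt (fun s => doubleStar f s - f s) (-u / t - f') t :=
    ((hasDerivAt_doubleStar ht.ne' hfi hmeas hf.continuousAt).sub hf).congr_deriv (by ring)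
  refine ((hu.rpow_const (Or.inr hp)).fun_mul
    (hasDerivAt_rpow_const (p := 1 - p / n) (Or.inl ht.ne'))).congr_deriv ?_
  rw [show 1 - p / n - 1 = -(p / n) by ring, sub_eq_add_neg 1 (p / n), rpow_add ht, rpow_one,
    ← rpow_sub_one_mul_self (by linarith : p ≠ 0) u]
  field_simp
  ring

lemma mazyaTalentiFunctional_deriv_le {n p t u v : ℝ} (hp : 1 ≤ p) (ht : 0 < t) (hu : 0 ≤ u)
    (hv : 0 ≤ v) :
    (1 - p / n - p) * (t ^ (-(p / n)) * u ^ p) + p * (t ^ (1 - p / n) * u ^ (p - 1) * v)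
      ≤ (t ^ (1 - 1 / n) * v) ^ p - p / n * (t ^ (-(p / n)) * u ^ p) := by
  have hp0 : 0 < p := by linarith
  have hyoung := rpow_sub_one_mul_le (mul_nonneg (rpow_nonneg ht.le (-(1 / n))) hu)
    (mul_nonneg (rpow_nonneg ht.le (1 - 1 / n)) hv) hp
  have hmixed : (t ^ (-(1 / n)) * u) ^ (p - 1) * (t ^ (1 - 1 / n) * v)
      = t ^ (1 - p / n) * u ^ (p - 1) * v := by
    rw [mul_rpow (rpow_nonneg ht.le _) hu, ← rpow_mul ht.le,
      show 1 - p / n = -(1 / n) * (p - 1) + (1 - 1 / n) by ring, rpow_add ht]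
    ring
  have hpure : (t ^ (-(1 / n)) * u) ^ p = t ^ (-(p / n)) * u ^ p := by
    rw [mul_rpow (rpow_nonneg ht.le _) hu, ← rpow_mul ht.le,
      show -(1 / n) * p = -(p / n) by ring]
  rw [hmixed, hpure] at hyoung
  have hscaled : p * (t ^ (1 - p / n) * u ^ (p - 1) * v)
      ≤ (p - 1) * (t ^ (-(p / n)) * u ^ p) + (t ^ (1 - 1 / n) * v) ^ p :=
    calc p * (t ^ (1 - p / n) * u ^ (p - 1) * v)
        ≤ p * ((p - 1) / p * (t ^ (-(p / n)) * u ^ p)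
            + 1 / p * (t ^ (1 - 1 / n) * v) ^ p) := by
          gcongr
      _ = (p - 1) * (t ^ (-(p / n)) * u ^ p) + (t ^ (1 - 1 / n) * v) ^ p := by
          field_simp
  linarith

section Absorption

variable {n p T : ℝ} {f f' : ℝ → ℝ}

lemma integral_sub_le_mazyaTalentiFunctional {a c : ℝ} (hp : 1 ≤ p)
    (hf : AntitoneOn f (Ioo 0 T)) (hfi : IntegrableOn f (Ioo 0 T))
    (hf' : ∀ t ∈ Ioo 0 T, HasDerivAt f (f' t) t)
    (hb : IntegrableOn (fun t => (t ^ (1 - 1 / n) * -f' t) ^ p) (Ioo 0 T))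
    (hg : IntegrableOn (fun t => t ^ (-(p / n)) * (doubleStar f t - f t) ^ p) (Ioo 0 T))
    (ha : 0 < a) (hac : a < c) (hcT : c < T) :
    ∫ t in a..c, (p / n * (t ^ (-(p / n)) * (doubleStar f t - f t) ^ p)
      - (t ^ (1 - 1 / n) * -f' t) ^ p) ≤ mazyaTalentiFunctional n p f a := by
  have hsub : Icc a c ⊆ Ioo 0 T := Icc_subset_Ioo ha hcT
  have hmeas := ContinuousOn.stronglyMeasurableAtFilter (μ := volume) isOpen_Ioo
    fun t ht => (hf' t ht).continuousAt.continuousWithinAt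
  have hderiv : ∀ t ∈ Ioo 0 T, HasDerivAt (mazyaTalentiFunctional n p f)
      ((1 - p / n - p) * (t ^ (-(p / n)) * (doubleStar f t - f t) ^ p)
        + p * (t ^ (1 - p / n) * (doubleStar f t - f t) ^ (p - 1) * -f' t)) t :=
    fun t ht => hasDerivAt_mazyaTalentiFunctional hp ht.1
      (IntegrableOn.intervalIntegrable_of_mem_Ioc hfi ⟨ht.1, ht.2.le⟩) (hmeas t ht) (hf' t ht)
  have hφ : IntegrableOn (fun t => -(p / n * (t ^ (-(p / n)) * (doubleStar f t - f t) ^ p)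
      - (t ^ (1 - 1 / n) * -f' t) ^ p)) (Icc a c) :=
    IntegrableOn.mono_set ((hg.const_mul (p / n)).sub hb).neg hsub
  have hftc := sub_le_integral_of_hasDeriv_right_of_le hac.le
    (fun t ht => (hderiv t (hsub ht)).continuousAt.continuousWithinAt)
    (fun t ht => (hderiv t (hsub (Ioo_subset_Icc_self ht))).hasDerivWithinAt) hφ
    fun t ht => by
      have ht' := hsub (Ioo_subset_Icc_self ht)
      have hf't := (hf' t ht').nonpos_of_antitoneOn hf (isOpen_Ioo.mem_nhds ht')
      have := mazyaTalentiFunctional_deriv_le (n := n) hp ht'.1 (doubleStar_sub_nonneg hf hfi ht')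
        (neg_nonneg.2 hf't)
      linarith
  have hFc : 0 ≤ mazyaTalentiFunctional n p f c :=
    mul_nonneg (rpow_nonneg (doubleStar_sub_nonneg hf hfi (hsub (right_mem_Icc.2 hac.le))) _)
      (rpow_nonneg (ha.trans hac).le _)
  rw [intervalIntegral.integral_neg] at hftc
  linarith

lemma mul_integral_le_integral (hp : 1 ≤ p) (hT : 0 < T)
    (hf : AntitoneOn f (Ioo 0 T)) (hfi : IntegrableOn f (Ioo 0 T))
    (hf' : ∀ t ∈ Ioo 0 T, HasDerivAt f (f' t) t)
    (hb : IntegrableOn (fun t => (t ^ (1 - 1 / n) * -f' t) ^ p) (Ioo 0 T))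
    (hg : IntegrableOn (fun t => t ^ (-(p / n)) * (doubleStar f t - f t) ^ p) (Ioo 0 T)) :
    p / n * ∫ t in 0..T, t ^ (-(p / n)) * (doubleStar f t - f t) ^ p
      ≤ ∫ t in 0..T, (t ^ (1 - 1 / n) * -f' t) ^ p := by
  have hΦ : ∫ t in 0..T, (p / n * (t ^ (-(p / n)) * (doubleStar f t - f t) ^ p)
      - (t ^ (1 - 1 / n) * -f' t) ^ p) ≤ 0 := intervalIntegral_nonpos_of_le_of_frequently_lt hT
    ((integrableOn_Icc_iff_integrableOn_Ioo).2 ((hg.const_mul (p / n)).sub hb))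
    (fun _ _ ha hac hcT => integral_sub_le_mazyaTalentiFunctional hp hf hfi hf' hb hg ha hac hcT)
    fun η hη => (frequently_mul_lt_of_integrableOn hT hη hg).mp <|
      eventually_mem_nhdsWithin.mono fun a ha h => by
        rwa [mazyaTalentiFunctional_eq_mul (mem_Ioi.1 ha)]
  have hgi := (intervalIntegrable_iff_integrableOn_Ioo_of_le hT.le).2 hg
  have hbi := (intervalIntegrable_iff_integrableOn_Ioo_of_le hT.le).2 hb
  rw [intervalIntegral.integral_sub (hgi.const_mul _) hbi, intervalIntegral.integral_const_mul]
    at hΦ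
  linarith

end Absorption

lemma integrableOn_Ioo_of_intervalIntegrable {f : ℝ → ℝ} {T t : ℝ}
    (hf0 : ∀ s ∈ Ioo 0 T, 0 ≤ f s) (hf : AntitoneOn f (Ioo 0 T))
    (hfc : ContinuousOn f (Ioo 0 T)) (ht : t ∈ Ioo 0 T) (hfi : IntervalIntegrable f volume 0 t) :
    IntegrableOn f (Ioo 0 T) := by
  have hIco : IntegrableOn f (Ico t T) := by
    have hsub : Ico t T ⊆ Ioo 0 T := fun s hs => ⟨ht.1.trans_le hs.1, hs.2⟩
    refine IntegrableOn.of_bound measure_Ico_lt_top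
      ((hfc.mono hsub).aestronglyMeasurable measurableSet_Ico) (f t) ?_
    filter_upwards [ae_restrict_mem measurableSet_Ico] with s hs
    rw [norm_of_nonneg (hf0 s (hsub hs))]
    exact hf ht (hsub hs) hs.1
  refine (hfi.1.union hIco).mono_set fun s hs => ?_
  rcases le_or_gt s t with h | h
  · exact Or.inl ⟨hs.1, h⟩
  · exact Or.inr ⟨h.le, hs.2⟩

lemma integrableOn_Ioo_of_integrableOn_rpow_neg_mul_rpow {f : ℝ → ℝ} {T p r : ℝ}
    (hp : 1 ≤ p) (hr : 0 ≤ r) (hf0 : ∀ t ∈ Ioo 0 T, 0 ≤ f t)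
    (hfm : AEStronglyMeasurable f (volume.restrict (Ioo 0 T)))
    (h : IntegrableOn (fun t => t ^ (-r) * f t ^ p) (Ioo 0 T)) : IntegrableOn f (Ioo 0 T) := by
  have hdom : IntegrableOn (fun t => 1 + T ^ r * (t ^ (-r) * f t ^ p)) (Ioo 0 T) :=
    (integrableOn_const (hs := measure_Ioo_lt_top.ne)).add (h.const_mul (T ^ r))
  refine Integrable.mono' hdom hfm ?_
  filter_upwards [ae_restrict_mem measurableSet_Ioo] with t ht
  have hweight : 1 ≤ T ^ r * t ^ (-r) := by
    rw [rpow_neg ht.1.le, ← div_eq_mul_inv, one_le_div (rpow_pos_of_pos ht.1 r)]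
    exact rpow_le_rpow ht.1.le ht.2.le hr
  have hfp := rpow_nonneg (hf0 t ht) p
  rw [norm_of_nonneg (hf0 t ht)]
  calc f t ≤ 1 + f t ^ p := self_le_one_add_rpow (hf0 t ht) hp
    _ ≤ 1 + T ^ r * (t ^ (-r) * f t ^ p) := by nlinarith

-- If `f` is not integrable near `0`, then `∫ s in 0..t, f s = 0` and the integrand below is
-- `cos (p π) t^(-p/n) f(t)^p`; its integrability forces `cos (p π) = 0`.
lemma integral_eq_zero_of_not_integrableOn {n p T : ℝ} {f : ℝ → ℝ} (hn : 0 ≤ n) (hp : 1 ≤ p)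
    (hT : 0 ≤ T) (hf0 : ∀ s ∈ Ioo 0 T, 0 ≤ f s) (hf : AntitoneOn f (Ioo 0 T))
    (hfc : ContinuousOn f (Ioo 0 T)) (hfi : ¬ IntegrableOn f (Ioo 0 T))
    (hg : IntegrableOn (fun t => t ^ (-(p / n)) * (doubleStar f t - f t) ^ p) (Ioo 0 T)) :
    ∫ t in 0..T, t ^ (-(p / n)) * (doubleStar f t - f t) ^ p = 0 := by
  have hg_eq : ∀ t ∈ Ioo 0 T,
      t ^ (-(p / n)) * (doubleStar f t - f t) ^ p = cos (p * π) * (t ^ (-(p / n)) * f t ^ p) := by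
    intro t ht
    rw [doubleStar,
      integral_undef fun h => hfi (integrableOn_Ioo_of_intervalIntegrable hf0 hf hfc ht h),
      mul_zero, zero_sub, neg_rpow_of_nonneg (hf0 t ht) (by linarith)]
    ring
  have hcos : cos (p * π) = 0 := by
    by_contra hcos
    refine hfi (integrableOn_Ioo_of_integrableOn_rpow_neg_mul_rpow (r := p / n) hp
      (by positivity) hf0 (hfc.aestronglyMeasurable measurableSet_Ioo) ?_)
    refine IntegrableOn.congr_fun (hg.const_mul (cos (p * π))⁻¹) (fun t ht => ?_)
      measurableSet_Ioo
    rw [hg_eq t ht, inv_mul_cancel_left₀ hcos]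
  rw [integral_congr_Ioo_of_le hT (g := fun _ => 0) fun t ht => by simp [hg_eq t ht, hcos],
    intervalIntegral.integral_zero]

lemma mazyaTalenti_estimate {n p T : ℝ} {f f' : ℝ → ℝ} (hn : 0 < n) (hp : 1 ≤ p) (hT : 0 < T)
    (hf0 : ∀ s ∈ Ioo 0 T, 0 ≤ f s) (hf : AntitoneOn f (Ioo 0 T))
    (hf' : ∀ t ∈ Ioo 0 T, HasDerivAt f (f' t) t)
    (hb : IntegrableOn (fun t => (t ^ (1 - 1 / n) * -f' t) ^ p) (Ioo 0 T))
    (hg : IntegrableOn (fun t => t ^ (-(p / n)) * (doubleStar f t - f t) ^ p) (Ioo 0 T)) :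
    (∫ t in 0..T, t ^ (-(p / n)) * (doubleStar f t - f t) ^ p) ^ (1 / p)
      ≤ (n / p) ^ (1 / p) * (∫ t in 0..T, (t ^ (1 - 1 / n) * -f' t) ^ p) ^ (1 / p) := by
  have hfc : ContinuousOn f (Ioo 0 T) := fun t ht => (hf' t ht).continuousAt.continuousWithinAt
  have hB : 0 ≤ ∫ t in 0..T, (t ^ (1 - 1 / n) * -f' t) ^ p :=
    intervalIntegral_nonneg_of_forall_Ioo hT.le fun t ht => rpow_nonneg (mul_nonneg
      (rpow_nonneg ht.1.le _) (neg_nonneg.2 ((hf' t ht).nonpos_of_antitoneOn hf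
        (isOpen_Ioo.mem_nhds ht)))) p
  obtain ⟨hA, hAB⟩ : 0 ≤ ∫ t in 0..T, t ^ (-(p / n)) * (doubleStar f t - f t) ^ p ∧
      p / n * ∫ t in 0..T, t ^ (-(p / n)) * (doubleStar f t - f t) ^ p
        ≤ ∫ t in 0..T, (t ^ (1 - 1 / n) * -f' t) ^ p := by
    by_cases hfi : IntegrableOn f (Ioo 0 T)
    · exact ⟨intervalIntegral_nonneg_of_forall_Ioo hT.le fun t ht => mul_nonneg
          (rpow_nonneg ht.1.le _) (rpow_nonneg (doubleStar_sub_nonneg hf hfi ht) p),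
        mul_integral_le_integral hp hT hf hfi hf' hb hg⟩
    · rw [integral_eq_zero_of_not_integrableOn hn.le hp hT.le hf0 hf hfc hfi hg, mul_zero]
      exact ⟨le_rfl, hB⟩
  rw [← mul_rpow (by positivity) hB]
  refine rpow_le_rpow hA ?_ (by positivity)
  calc _ = n / p * (p / n * ∫ t in 0..T, t ^ (-(p / n)) * (doubleStar f t - f t) ^ p) := by
        field_simp
    _ ≤ _ := by gcongr

theorem stmt17_general (n : ℕ) (p : ℝ) (hp1 : 1 ≤ p) (hpn : p < n)
    (pbar : ℝ) (hpbar : 1 / pbar = 1 / p - 1 / n) :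
    ∃ C : ℝ, 0 < C ∧
      ∀ (T : ℝ), 0 < T →
      ∀ (f f' : ℝ → ℝ),
        (∀ s, 0 < s → s < T → 0 ≤ f s) →
        AntitoneOn f (Set.Ioo 0 T) →
        (∀ t ∈ Set.Ioo (0 : ℝ) T, HasDerivAt f (f' t) t) →
        Tendsto f (nhdsWithin T (Set.Iio T)) (nhds 0) →
        IntegrableOn (fun t => (t ^ (1 - 1 / (n : ℝ)) * (-f' t)) ^ p) (Set.Ioo 0 T) →
        IntegrableOn
          (fun t => t ^ (-(p / n)) * (((1 / t) * ∫ s in (0 : ℝ)..t, f s) - f t) ^ p)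
          (Set.Ioo 0 T) →
        (∫ t in (0 : ℝ)..T,
            ((((1 / t) * ∫ s in (0 : ℝ)..t, f s) - f t) * t ^ (1 / pbar)) ^ p / t)
            ^ (1 / p)
          ≤ C * (∫ t in (0 : ℝ)..T, (t ^ (1 - 1 / (n : ℝ)) * (-f' t)) ^ p) ^ (1 / p) := by
  have hn : (0 : ℝ) < n := by linarith
  refine ⟨(n / p) ^ (1 / p), by positivity, fun T hT f f' hf0 hf hf' _ hb hg => ?_⟩
  have hlhs : ∫ t in (0 : ℝ)..T, ((doubleStar f t - f t) * t ^ (1 / pbar)) ^ p / t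
      = ∫ t in (0 : ℝ)..T, t ^ (-(p / n)) * (doubleStar f t - f t) ^ p := by
    refine integral_congr_Ioo_of_le hT.le fun t ht => ?_
    have ht0 : t ≠ 0 := ht.1.ne'
    rw [mul_rpow_of_pos_right (rpow_pos_of_pos ht.1 _), ← rpow_mul ht.1.le, hpbar,
      show (1 / p - 1 / n) * p = 1 + -(p / n) by field_simp; ring, rpow_add ht.1, rpow_one]
    field_simp
  change (∫ t in (0 : ℝ)..T, ((doubleStar f t - f t) * t ^ (1 / pbar)) ^ p / t) ^ (1 / p) ≤ _
  rw [hlhs]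
  exact mazyaTalenti_estimate hn hp1 hT (fun s hs => hf0 s hs.1 hs.2) hf hf' hb hg

theorem stmt17 (n : ℕ) (hn : 2 ≤ n) (p : ℝ) (hp1 : 1 ≤ p) (hpn : p < n)
    (pbar : ℝ) (hpbar : 1 / pbar = 1 / p - 1 / n) :
    ∃ C : ℝ, 0 < C ∧
      ∀ (T : ℝ), 0 < T →
      ∀ (f f' : ℝ → ℝ),
        (∀ s, 0 < s → s < T → 0 ≤ f s) →
        AntitoneOn f (Set.Ioo 0 T) →
        (∀ t ∈ Set.Ioo (0 : ℝ) T, HasDerivAt f (f' t) t) →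
        Tendsto f (nhdsWithin T (Set.Iio T)) (nhds 0) →
        IntegrableOn (fun t => (t ^ (1 - 1 / (n : ℝ)) * (-f' t)) ^ p) (Set.Ioo 0 T) →
        IntegrableOn
          (fun t => t ^ (-(p / n)) * (((1 / t) * ∫ s in (0 : ℝ)..t, f s) - f t) ^ p)
          (Set.Ioo 0 T) →
        (∫ t in (0 : ℝ)..T,
            ((((1 / t) * ∫ s in (0 : ℝ)..t, f s) - f t) * t ^ (1 / pbar)) ^ p / t)
            ^ (1 / p)
          ≤ C * (∫ t in (0 : ℝ)..T, (t ^ (1 - 1 / (n : ℝ)) * (-f' t)) ^ p) ^ (1 / p) :=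
  stmt17_general n p hp1 hpn pbar hpbar
end
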